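/- Let h, λ, μ, σ, δ, ε, C0, C2 be positive reals with C0 ≥ λ and C2 ≥ δ, and let s_n ≥ ε, s_{n-m} ≥ 0 be reals. Then for any reals ΔW and ΔÑ, the balanced-method update s_{n+1} = s_n + (λ(μ - s_n)h + σ s_{n-m}^γ √s_n ΔW + δ s_n ΔÑ)/(1 + C0 h + σ (s_{n-m}^γ/√s_n)|ΔW| + C2|ΔÑ|) satisfies s_{n+1} ≥ 0. -/
import Mathlib


/-- Nonnegativity of one step of the balanced implicit method for the delay CIR
model with jump. -/
theorem bim_step_nonneg
    (h lam mu sigma delta eps C0 C2 γ sn snm ΔW ΔN : ℝ)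
    (hh : 0 < h) (hlam : 0 < lam) (hmu : 0 < mu) (hsigma : 0 < sigma)
    (hdelta : 0 < delta) (heps : 0 < eps) (hC0pos : 0 < C0) (hC2pos : 0 < C2)
    (hγ : 0 < γ) (hC0 : C0 ≥ lam) (hC2 : C2 ≥ delta)
    (hsn : sn ≥ eps) (hsnm : snm ≥ 0) :
    0 ≤ sn + (lam * (mu - sn) * h + sigma * snm ^ γ * Real.sqrt sn * ΔW
          + delta * sn * ΔN)
        / (1 + C0 * h + sigma * (snm ^ γ / Real.sqrt sn) * |ΔW| + C2 * |ΔN|) := by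
  have hsn0 : (0:ℝ) < sn := lt_of_lt_of_le heps hsn
  have hsq : 0 < Real.sqrt sn := Real.sqrt_pos.mpr hsn0
  have hsqsq : Real.sqrt sn * Real.sqrt sn = sn := Real.mul_self_sqrt hsn0.le
  have hpow : 0 ≤ snm ^ γ := Real.rpow_nonneg hsnm γ
  have hW1 : ΔW ≤ |ΔW| := le_abs_self ΔW
  have hW2 : -|ΔW| ≤ ΔW := neg_abs_le ΔW
  have hN1 : ΔN ≤ |ΔN| := le_abs_self ΔN
  have hN2 : -|ΔN| ≤ ΔN := neg_abs_le ΔN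
  have habsW : 0 ≤ |ΔW| := abs_nonneg ΔW
  have habsN : 0 ≤ |ΔN| := abs_nonneg ΔN
  have hD : 0 < 1 + C0 * h + sigma * (snm ^ γ / Real.sqrt sn) * |ΔW| + C2 * |ΔN| := by
    have : 0 ≤ sigma * (snm ^ γ / Real.sqrt sn) * |ΔW| :=
      mul_nonneg (mul_nonneg hsigma.le (div_nonneg hpow hsq.le)) habsW
    nlinarith [mul_nonneg hC2pos.le habsN, mul_pos hC0pos hh]
  set D := 1 + C0 * h + sigma * (snm ^ γ / Real.sqrt sn) * |ΔW| + C2 * |ΔN| with hDdef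
  set num := lam * (mu - sn) * h + sigma * snm ^ γ * Real.sqrt sn * ΔW + delta * sn * ΔN
  have h1 : sn + num / D = (sn * D + num) / D := by field_simp
  rw [h1]
  apply div_nonneg _ hD.le
  have key : 0 ≤ sigma * snm ^ γ * Real.sqrt sn * (ΔW + |ΔW|) :=
    mul_nonneg (mul_nonneg (mul_nonneg hsigma.le hpow) hsq.le) (by linarith)
  have hdiv : sn * (snm ^ γ / Real.sqrt sn) = snm ^ γ * Real.sqrt sn := by
    field_simp
    nlinarith
  have h2 : sn * (sigma * (snm ^ γ / Real.sqrt sn) * |ΔW|)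
      = sigma * (snm ^ γ * Real.sqrt sn) * |ΔW| := by
    rw [show sn * (sigma * (snm ^ γ / Real.sqrt sn) * |ΔW|)
        = sigma * (sn * (snm ^ γ / Real.sqrt sn)) * |ΔW| by ring, hdiv]
  have key2 : 0 ≤ sigma * (snm ^ γ * Real.sqrt sn) * (ΔW + |ΔW|) :=
    mul_nonneg (mul_nonneg hsigma.le (mul_nonneg hpow hsq.le)) (by linarith)
  have expand : sn * D + num = sn + lam * mu * h + (C0 - lam) * sn * h
      + sigma * (snm ^ γ * Real.sqrt sn) * (ΔW + |ΔW|)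
      + sn * (C2 * |ΔN| + delta * ΔN) := by
    simp only [hDdef, num]
    linear_combination h2
  rw [expand]
  have t1 : 0 ≤ lam * mu * h := by positivity
  have t2 : 0 ≤ (C0 - lam) * sn * h :=
    mul_nonneg (mul_nonneg (by linarith) hsn0.le) hh.le
  have t3 : 0 ≤ sn * (C2 * |ΔN| + delta * ΔN) :=
    mul_nonneg hsn0.le (by nlinarith)
  linarith
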